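/- arXiv:1708.07043 — 15 statements merged into one kernel-verified Lean document; each statement's English description precedes it below -/
import Mathlib

section
/- If an element a of a ring R has a Hirano inverse b, then b is a Drazin inverse of a; that is, a - a²b is nilpotent, ab = ba, and b = bab. -/
/-!
Put `e := a * b`. From `b = b * a * b` and `a * b = b * a`, `e` is an idempotent commuting with `a`,
and `a - a ^ 2 * b = a * (1 - e)`. Since `e * (1 - e) = 0`, the square of this element is
`a ^ 2 * (1 - e) = (a ^ 2 - e) * (1 - e)`, a nilpotent element times one commuting with it.
-/

def IsHiranoInverse {R : Type*} [Ring R] (a b : R) : Prop :=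
  IsNilpotent (a ^ 2 - a * b) ∧ a * b = b * a ∧ b = b * a * b

def IsDrazinInverse {R : Type*} [Ring R] (a b : R) : Prop :=
  IsNilpotent (a - a ^ 2 * b) ∧ a * b = b * a ∧ b = b * a * b

section IdempotentCommuting

variable {R : Type*} [Ring R] {a e : R}

theorem sub_mul_sq_eq_of_isIdempotentElem (he : IsIdempotentElem e) (hae : Commute a e) :
    (a - a * e) ^ 2 = (a ^ 2 - e) * (1 - e) := by
  have hfac : a - a * e = a * (1 - e) := by rw [mul_sub, mul_one]
  calc (a - a * e) ^ 2 = a ^ 2 * (1 - e) ^ 2 := by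
        rw [hfac, ((Commute.one_right a).sub_right hae).mul_pow]
    _ = a ^ 2 * (1 - e) := by rw [IsIdempotentElem.pow_succ_eq 1 he.one_sub]
    _ = (a ^ 2 - e) * (1 - e) := by rw [sub_mul, he.mul_one_sub_self, sub_zero]

theorem isNilpotent_sub_mul_of_isNilpotent_sq_sub (he : IsIdempotentElem e) (hae : Commute a e)
    (hn : IsNilpotent (a ^ 2 - e)) : IsNilpotent (a - a * e) := by
  have hcomm : Commute (a ^ 2 - e) (1 - e) :=
    (Commute.one_right _).sub_right ((hae.pow_left 2).sub_left (Commute.refl e))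
  exact IsNilpotent.of_pow (m := 2) <| by
    rw [sub_mul_sq_eq_of_isIdempotentElem he hae]
    exact hcomm.isNilpotent_mul_right hn

end IdempotentCommuting

theorem isIdempotentElem_mul_of_eq_mul_mul {M : Type*} [Semigroup M] {a b : M} (hb : b = b * a * b) :
    IsIdempotentElem (a * b) := by
  rw [IsIdempotentElem, mul_assoc, ← mul_assoc b, ← hb]

theorem stmt0 {R : Type*} [Ring R] (a b : R) (h : IsHiranoInverse a b) :
    IsDrazinInverse a b := by
  obtain ⟨hn, hc, hb⟩ := h
  have hab : Commute a (a * b) := (Commute.refl a).mul_right hc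
  have hnil := isNilpotent_sub_mul_of_isNilpotent_sq_sub
    (isIdempotentElem_mul_of_eq_mul_mul hb) hab hn
  rw [← mul_assoc, ← sq] at hnil
  exact ⟨hnil, hc, hb⟩
end

section
/- An element a of a ring R has at most one Hirano inverse. -/
private lemma hir_key {R : Type*} [Ring R] {a b : R}
    (hn : IsNilpotent (a ^ 2 - a * b)) (hab : a * b = b * a) (hbab : b = b * a * b) :
    ∃ N, a ^ N = a ^ (N + 1) * b := by
  obtain ⟨k, hk⟩ := hn
  have hidem : a * b * (a * b) = a * b := by
    rw [mul_assoc, ← mul_assoc b a b, ← hbab]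
  have hcomm : Commute a (a * b) := (Commute.refl a).mul_right hab
  have hcomm2 : Commute (a ^ 2 - a * b) a :=
    (((Commute.refl a).pow_left 2).sub_left hcomm.symm)
  have key : ∀ m, (a ^ 2 - a * b) ^ m * (1 - a * b) = a ^ (2 * m) * (1 - a * b) := by
    intro m
    induction m with
    | zero => simp
    | succ m ih =>
      have step : (a ^ 2 - a * b) * (1 - a * b) = a ^ 2 * (1 - a * b) := by
        have h0 : (a * b) * (1 - a * b) = 0 := by
          rw [mul_sub, mul_one, hidem, sub_self]
        rw [sub_mul, h0, sub_zero]
      calc (a ^ 2 - a * b) ^ (m + 1) * (1 - a * b)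
          = (a ^ 2 - a * b) ^ m * ((a ^ 2 - a * b) * (1 - a * b)) := by
            rw [pow_succ, mul_assoc]
        _ = (a ^ 2 - a * b) ^ m * (a ^ 2 * (1 - a * b)) := by rw [step]
        _ = a ^ 2 * ((a ^ 2 - a * b) ^ m * (1 - a * b)) := by
            rw [← mul_assoc, ← mul_assoc, ((hcomm2.pow_left m).pow_right 2)]
        _ = a ^ 2 * (a ^ (2 * m) * (1 - a * b)) := by rw [ih]
        _ = a ^ (2 * (m + 1)) * (1 - a * b) := by
            rw [← mul_assoc, ← pow_add]; ring_nf
  refine ⟨2 * k, ?_⟩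
  have h1 : a ^ (2 * k) * (1 - a * b) = 0 := by rw [← key k, hk, zero_mul]
  have h2 : a ^ (2 * k) - a ^ (2 * k + 1) * b = 0 := by
    rw [← h1, mul_sub, mul_one, pow_succ, mul_assoc]
  exact sub_eq_zero.mp h2

private lemma hir_mono {R : Type*} [Ring R] {a x : R} {M : ℕ} (h : a ^ M = a ^ (M + 1) * x) :
    ∀ j, a ^ (M + j) = a ^ (M + j + 1) * x := by
  intro j
  induction j with
  | zero => simpa using h
  | succ j ih =>
    calc a ^ (M + (j + 1)) = a * a ^ (M + j) := by rw [← pow_succ']; rfl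
      _ = a * (a ^ (M + j + 1) * x) := by rw [ih]
      _ = a ^ (M + (j + 1) + 1) * x := by rw [← mul_assoc, ← pow_succ']; rfl

private lemma hir_absorb {R : Type*} [Ring R] {b x : R} (h : b * x = b) :
    ∀ n, b * x ^ n = b := by
  intro n
  induction n with
  | zero => simp
  | succ n ih => rw [pow_succ, ← mul_assoc, ih, h]

theorem stmt1 {R : Type*} [Ring R] (a b c : R)
    (hb : IsHiranoInverse a b) (hc : IsHiranoInverse a c) : b = c := by
  obtain ⟨hnb, hab, hbab⟩ := hb
  obtain ⟨hnc, hac, hcac⟩ := hc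
  obtain ⟨Nb, hNb⟩ := hir_key hnb hab hbab
  obtain ⟨Nc, hNc⟩ := hir_key hnc hac hcac
  set N := Nb + Nc with hN
  have hNb' : a ^ N = a ^ (N + 1) * b := hir_mono hNb Nc
  have hNc' : a ^ N = a ^ (N + 1) * c := by
    have := hir_mono hNc Nb
    rwa [Nat.add_comm Nc Nb] at this
  have cab : Commute a b := hab
  have cac : Commute a c := hac
  have cba : Commute b a := cab.symm
  have cca : Commute c a := cac.symm
  -- absorption facts
  have hb1 : b * (b * a) = b := by rw [← hab, ← mul_assoc, ← hbab]
  have hc1 : c * (c * a) = c := by rw [← hac, ← mul_assoc, ← hcac]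
  have habsb := hir_absorb hb1
  have habsc := hir_absorb hc1
  -- a^N absorbs (a*c) on the right
  have hstep : a ^ N * (a * c) = a ^ N := by
    conv_rhs => rw [hNc']
    rw [pow_succ, mul_assoc]
  -- e1 : b * (a*c) = b
  have e1 : b * (a * c) = b := by
    calc b * (a * c) = b * (b * a) ^ N * (a * c) := by rw [habsb N]
      _ = b * (b ^ N * a ^ N) * (a * c) := by rw [cba.mul_pow]
      _ = b * (b ^ N * (a ^ N * (a * c))) := by simp only [mul_assoc]
      _ = b * (b ^ N * a ^ N) := by rw [hstep]
      _ = b * (b * a) ^ N := by rw [cba.mul_pow]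
      _ = b := habsb N
  have e1' := hir_absorb e1
  -- a^N = b * a^(N+1)
  have hNb'' : a ^ N = b * a ^ (N + 1) := by
    rw [hNb', (cab.pow_left (N + 1)).eq]
  -- c = a^N * c^(N+1)
  have e2 : c = a ^ N * c ^ (N + 1) := by
    calc c = c * (c * a) ^ N := (habsc N).symm
      _ = c * (c ^ N * a ^ N) := by rw [cca.mul_pow]
      _ = c * (a ^ N * c ^ N) := by rw [((cca.symm).pow_pow N N).eq]
      _ = (c * a ^ N) * c ^ N := by rw [mul_assoc]
      _ = (a ^ N * c) * c ^ N := by rw [(cac.pow_left N).eq]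
      _ = a ^ N * (c * c ^ N) := by rw [mul_assoc]
      _ = a ^ N * c ^ (N + 1) := by rw [← pow_succ']
  calc b = b * (a * c) ^ (N + 1) := (e1' (N + 1)).symm
    _ = b * (a ^ (N + 1) * c ^ (N + 1)) := by rw [cac.mul_pow]
    _ = (b * a ^ (N + 1)) * c ^ (N + 1) := by rw [mul_assoc]
    _ = a ^ N * c ^ (N + 1) := by rw [← hNb'']
    _ = c := e2.symm
end

section
/- An element a of a ring R has a Hirano inverse if and only if a² has a strongly Drazin inverse. Moreover, if b is a Hirano inverse of a, then b² is a strongly Drazin inverse of a², and if x is a strongly Drazin inverse of a², then ax is a Hirano inverse of a. -/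
def IsStronglyDrazinInverse {R : Type*} [Ring R] (a x : R) : Prop :=
  IsNilpotent (a - a * x) ∧ a * x = x * a ∧ x = x * a * x

private lemma hirano_to_sd {R : Type*} [Ring R] (a b : R) (h : IsHiranoInverse a b) :
    IsStronglyDrazinInverse (a ^ 2) (b ^ 2) := by
  obtain ⟨hn, hc, hb⟩ := h
  have cab : Commute a b := hc
  have h1 : a ^ 2 * b ^ 2 = a * b := by
    calc a ^ 2 * b ^ 2 = a * (b * a * b) := by rw [← hc]; noncomm_ring
      _ = a * b := by rw [← hb]
  refine ⟨?_, ?_, ?_⟩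
  · rw [h1]; exact hn
  · exact (cab.pow_pow 2 2)
  · have h2 : b ^ 2 * a ^ 2 * b ^ 2 = b ^ 2 := by
      calc b ^ 2 * a ^ 2 * b ^ 2 = a ^ 2 * b ^ 2 * b ^ 2 := by rw [← (cab.pow_pow 2 2).eq]
        _ = a * b * b ^ 2 := by rw [h1]
        _ = b * a * b * b := by rw [hc]; noncomm_ring
        _ = b * b := by rw [← hb]
        _ = b ^ 2 := (sq b).symm
    exact h2.symm

private lemma sd_to_hirano {R : Type*} [Ring R] (a x : R)
    (h : IsStronglyDrazinInverse (a ^ 2) x) : IsHiranoInverse a (a * x) := by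
  obtain ⟨⟨k, hk0⟩, hc, hx⟩ := h
  have cax : Commute (a ^ 2) x := hc
  set e := a ^ 2 * x with he
  have hee : IsIdempotentElem e := by
    show e * e = e
    calc e * e = a ^ 2 * (x * a ^ 2 * x) := by rw [he]; noncomm_ring
      _ = e := by rw [← hx, he]
  have hex : e * x = x := by rw [hc]; exact hx.symm
  have hxe : x * e = x := by rw [he, ← mul_assoc]; exact hx.symm
  have hea2 : Commute e (a ^ 2) := by
    show e * a ^ 2 = a ^ 2 * e
    rw [he, mul_assoc, ← cax.eq]
  -- (a^2)^(k+1) * e = (a^2)^(k+1)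
  have hk : (a ^ 2 - e) ^ (k + 1) = 0 := by rw [pow_succ, hk0, zero_mul]
  have cu : Commute (a ^ 2) (1 - e) := (Commute.one_right (a ^ 2)).sub_right hea2.symm
  have cnu : Commute (a ^ 2 - e) (1 - e) :=
    cu.sub_left ((Commute.one_right e).sub_right (Commute.refl e))
  have hu : IsIdempotentElem (1 - e) := hee.one_sub
  have h6 : a ^ 2 * (1 - e) = (a ^ 2 - e) * (1 - e) := by
    have h6' : (a ^ 2 - e) * (1 - e) = a ^ 2 * (1 - e) - (e - e * e) := by noncomm_ring
    rw [h6', hee.eq, sub_self, sub_zero]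
  have h7 : (a ^ 2) ^ (k + 1) * (1 - e) = 0 := by
    have hmul := cu.mul_pow (k + 1)
    rw [h6, cnu.mul_pow (k + 1), hk, zero_mul] at hmul
    rw [← hu.pow_succ_eq k, ← hmul]
  have hke : (a ^ 2) ^ (k + 1) * e = (a ^ 2) ^ (k + 1) := by
    rw [mul_sub, mul_one, sub_eq_zero] at h7
    exact h7.symm
  have hek : e * (a ^ 2) ^ (k + 1) = (a ^ 2) ^ (k + 1) := by
    rw [(hea2.pow_right (k + 1)).eq, hke]
  -- e = (a^2)^(k+1) * x^(k+1)
  have h8 : e = (a ^ 2) ^ (k + 1) * x ^ (k + 1) := by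
    rw [← cax.mul_pow (k + 1), ← he, hee.pow_succ_eq k]
  -- a commutes with e
  have caa2K : Commute a ((a ^ 2) ^ (k + 1)) := ((Commute.refl a).pow_right 2).pow_right (k + 1)
  have cxa2K : Commute (x ^ (k + 1)) ((a ^ 2) ^ (k + 1)) := cax.symm.pow_pow (k + 1) (k + 1)
  have hea_form : e * a = x ^ (k + 1) * a * (a ^ 2) ^ (k + 1) := by
    rw [h8, ← cxa2K.eq, mul_assoc, ← caa2K.eq, ← mul_assoc]
  have heae : e * a * e = e * a := by
    calc e * a * e = x ^ (k + 1) * a * (a ^ 2) ^ (k + 1) * e := by rw [hea_form]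
      _ = x ^ (k + 1) * a * ((a ^ 2) ^ (k + 1) * e) := by rw [mul_assoc]
      _ = x ^ (k + 1) * a * (a ^ 2) ^ (k + 1) := by rw [hke]
      _ = e * a := hea_form.symm
  have haee : e * a * e = a * e := by
    calc e * a * e = e * (a * e) := mul_assoc _ _ _
      _ = e * (a * ((a ^ 2) ^ (k + 1) * x ^ (k + 1))) := by rw [← h8]
      _ = e * ((a ^ 2) ^ (k + 1) * (a * x ^ (k + 1))) := by
          rw [← mul_assoc a ((a ^ 2) ^ (k + 1)) (x ^ (k + 1)), caa2K.eq,
            mul_assoc ((a ^ 2) ^ (k + 1)) a (x ^ (k + 1))]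
      _ = (a ^ 2) ^ (k + 1) * (a * x ^ (k + 1)) := by rw [← mul_assoc, hek]
      _ = a * ((a ^ 2) ^ (k + 1) * x ^ (k + 1)) := by rw [← mul_assoc, ← caa2K.eq, mul_assoc]
      _ = a * e := by rw [← h8]
  have hae : a * e = e * a := by rw [← haee, heae]
  -- corner argument: x commutes with a*e
  have ha'e : a * e * e = a * e := by rw [mul_assoc, hee.eq]
  have hea' : e * (a * e) = a * e := by rw [← mul_assoc]; exact haee
  have hsq' : a * e * (a * e) = a ^ 2 * e := by
    rw [mul_assoc a e (a * e), hea', ← mul_assoc, ← sq]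
  have hxa2 : x * (a * e * (a * e)) = e := by
    rw [hsq', ← mul_assoc, ← hc, hee.eq]
  have ha2x : a * e * (a * e) * x = e := by
    rw [hsq', mul_assoc, hex, ← he]
  have l1 : x * (a * e) = x * (a * e) * (a * e * (a * e) * x) := by
    rw [ha2x, mul_assoc, ha'e]
  have l2 : a * e * x = x * (a * e * (a * e)) * (a * e * x) := by
    rw [hxa2, ← mul_assoc e (a * e) x, hea']
  have l3 : x * (a * e) * (a * e * (a * e) * x) = x * (a * e * (a * e)) * (a * e * x) := by
    simp only [mul_assoc]
  have hxa' : x * (a * e) = a * e * x := l1.trans (l3.trans l2.symm)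
  have hxa : x * a = a * x := by
    calc x * a = x * e * a := by rw [hxe]
      _ = x * (e * a) := mul_assoc _ _ _
      _ = x * (a * e) := by rw [← hae]
      _ = a * e * x := hxa'
      _ = a * (e * x) := mul_assoc _ _ _
      _ = a * x := by rw [hex]
  -- finish
  have hax2 : a * (a * x) = a ^ 2 * x := by rw [← mul_assoc, ← sq]
  refine ⟨?_, ?_, ?_⟩
  · rw [hax2, ← he]; exact ⟨k, hk0⟩
  · rw [mul_assoc, hxa]
  · calc a * x = a * (x * a ^ 2 * x) := by rw [← hx]
      _ = a * x * a * (a * x) := by noncomm_ring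

theorem stmt2 {R : Type*} [Ring R] (a : R) :
    ((∃ b, IsHiranoInverse a b) ↔ (∃ x, IsStronglyDrazinInverse (a ^ 2) x)) ∧
    (∀ b, IsHiranoInverse a b → IsStronglyDrazinInverse (a ^ 2) (b ^ 2)) ∧
    (∀ x, IsStronglyDrazinInverse (a ^ 2) x → IsHiranoInverse a (a * x)) := by
  refine ⟨⟨fun ⟨b, hb⟩ => ⟨b ^ 2, hirano_to_sd a b hb⟩,
          fun ⟨x, hx⟩ => ⟨a * x, sd_to_hirano a x hx⟩⟩,
          fun b hb => hirano_to_sd a b hb, fun x hx => sd_to_hirano a x hx⟩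
end

section
/- The 2×2 matrix a over Z/2Z with rows (0,1) and (1,1) has a Drazin inverse but has no Hirano inverse. -/
/-!
The matrix `A = !![0, 1; 1, 1]` satisfies `A² = A + 1` over `ZMod 2`, so `A³ = 1` and `A` is a unit;
its inverse is a Drazin inverse. A Hirano inverse `b` of a unit `a` is necessarily `a⁻¹`: since
`a² - ab = (a - b) a` with `a` a unit commuting with `b`, the element `b` differs from `a` by a
commuting nilpotent, so it is a unit and `b = bab` cancels to `ab = 1`. Hence `a² - 1` would be
nilpotent, but `A² - 1 = A` is a unit.
-/

theorem isDrazinInverse_of_mul_eq_one {R : Type*} [Ring R] {a b : R} (hab : a * b = 1)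
    (hba : b * a = 1) : IsDrazinInverse a b :=
  ⟨⟨1, by rw [pow_one, sq, mul_assoc, hab, mul_one, sub_self]⟩, hab.trans hba.symm,
    by rw [hba, one_mul]⟩

namespace IsHiranoInverse

variable {R : Type*} [Ring R] {a b : R}

theorem mul_eq_one (h : IsHiranoInverse a b) (ha : IsUnit a) : a * b = 1 := by
  obtain ⟨hnil, hcomm, hbab⟩ := h
  have hab : Commute a b := hcomm
  have hsub : IsNilpotent (b - a) := by
    have hfactor : (a - b) * a = a ^ 2 - a * b := by rw [sub_mul, sq, hcomm]
    rw [← neg_sub, isNilpotent_neg_iff,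
      ← ha.isNilpotent_mul_unit_of_commute_iff ((Commute.refl a).sub_left hab.symm), hfactor]
    exact hnil
  have hb : IsUnit b := by
    simpa using hsub.isUnit_add_left_of_commute ha ((hab.symm).sub_left (Commute.refl a))
  exact (hb.mul_left_cancel (by rw [mul_one, ← mul_assoc, ← hbab])).symm

theorem isNilpotent_sq_sub_one (h : IsHiranoInverse a b) (ha : IsUnit a) :
    IsNilpotent (a ^ 2 - 1) := by
  simpa only [h.mul_eq_one ha] using h.1

end IsHiranoInverse

theorem stmt3 :
    (∃ b, IsDrazinInverse (!![0, 1; 1, 1] : Matrix (Fin 2) (Fin 2) (ZMod 2)) b) ∧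
    ¬ (∃ b, IsHiranoInverse (!![0, 1; 1, 1] : Matrix (Fin 2) (Fin 2) (ZMod 2)) b) := by
  have hinv : (!![0, 1; 1, 1] : Matrix (Fin 2) (Fin 2) (ZMod 2)) * !![1, 1; 1, 0] = 1 := by
    decide
  have hinv' : (!![1, 1; 1, 0] : Matrix (Fin 2) (Fin 2) (ZMod 2)) * !![0, 1; 1, 1] = 1 := by
    decide
  refine ⟨⟨_, isDrazinInverse_of_mul_eq_one hinv hinv'⟩, ?_⟩
  rintro ⟨b, hb⟩
  have hunit : IsUnit (!![0, 1; 1, 1] : Matrix (Fin 2) (Fin 2) (ZMod 2)) :=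
    ⟨⟨_, _, hinv, hinv'⟩, rfl⟩
  have hsq : (!![0, 1; 1, 1] : Matrix (Fin 2) (Fin 2) (ZMod 2)) ^ 2 - 1 = !![0, 1; 1, 1] := by
    decide
  exact hunit.not_isNilpotent (hsq ▸ hb.isNilpotent_sq_sub_one hunit)
end

section
/- An element a of a ring R has a Hirano inverse if and only if a - a³ is nilpotent. -/
/-!
Everything happens in the commutative subring generated by `a` (and `b`), where the nilpotent
elements form an ideal. If `b` is a Hirano inverse of `a`, then `e = ab` is an idempotent with
`a² ≡ e`, so `(a(1 - e))² ≡ e(1 - e) = 0` and `a - a³ = a(1 - e) - a(a² - e)` is nilpotent.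
Conversely, if `a - a³` is nilpotent then `a²` is idempotent modulo the nilradical and lifts to
an idempotent `e` with `a² - e` nilpotent; then `u = 1 + (a² - e)` is a unit and `b = a e u⁻¹`
is a Hirano inverse of `a`.
-/

theorem isHiranoInverse_map_iff {R S : Type*} [Ring R] [Ring S] {f : R →+* S}
    (hf : Function.Injective f) {a b : R} :
    IsHiranoInverse (f a) (f b) ↔ IsHiranoInverse a b := by
  simp only [IsHiranoInverse, ← map_pow, ← map_mul, ← map_sub, IsNilpotent.map_iff hf,
    hf.eq_iff]

section CommRing

variable {S : Type*} [CommRing S]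

theorem IsHiranoInverse.isNilpotent_sub_pow_three {a b : S} (h : IsHiranoInverse a b) :
    IsNilpotent (a - a ^ 3) := by
  obtain ⟨hn, -, hb⟩ := h
  have he : a * b * (a * b) = a * b := by
    conv_rhs => rw [hb]
    ring
  have hsq : (a * (1 - a * b)) ^ 2 = (a ^ 2 - a * b) * (1 - a * b) := by
    linear_combination (a ^ 2 - 1) * he
  have h₁ : IsNilpotent (a * (1 - a * b)) :=
    IsNilpotent.of_pow (hsq ▸ (Commute.all _ _).isNilpotent_mul_right hn)
  have h₂ : IsNilpotent (a * (a ^ 2 - a * b)) := (Commute.all _ _).isNilpotent_mul_left hn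
  have hsplit : a - a ^ 3 = a * (1 - a * b) - a * (a ^ 2 - a * b) := by ring
  exact hsplit ▸ (Commute.all _ _).isNilpotent_sub h₁ h₂

theorem exists_isIdempotentElem_isNilpotent_sub {x : S} (h : IsNilpotent (x - x ^ 2)) :
    ∃ e, IsIdempotentElem e ∧ IsNilpotent (x - e) := by
  have hker : ∀ y ∈ RingHom.ker (Ideal.Quotient.mk (nilradical S)), IsNilpotent y := by
    simp [Ideal.mk_ker, mem_nilradical]
  have hx : IsIdempotentElem (Ideal.Quotient.mk (nilradical S) x) := by
    rw [IsIdempotentElem, ← map_mul, eq_comm, ← sub_eq_zero, ← map_sub,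
      Ideal.Quotient.eq_zero_iff_mem, mem_nilradical, ← sq]
    exact h
  obtain ⟨e, he, hxe⟩ := exists_isIdempotentElem_eq_of_ker_isNilpotent _ hker _ ⟨x, rfl⟩ hx
  refine ⟨e, he, ?_⟩
  rw [← mem_nilradical, ← Ideal.Quotient.eq]
  exact hxe.symm

theorem exists_isHiranoInverse_of_isIdempotentElem {a e : S} (he : IsIdempotentElem e)
    (hae : IsNilpotent (a ^ 2 - e)) : ∃ b, IsHiranoInverse a b := by
  obtain ⟨v, hv⟩ := hae.isUnit_one_add.exists_right_inv
  have hab : a * (a * e * v) = e := by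
    linear_combination e * hv + v * he.eq
  refine ⟨a * e * v, ?_, mul_comm _ _, ?_⟩
  · rwa [hab]
  · linear_combination (-(a * e * v)) * hab - a * v * he.eq

theorem exists_isHiranoInverse_of_isNilpotent {a : S} (h : IsNilpotent (a - a ^ 3)) :
    ∃ b, IsHiranoInverse a b := by
  have hsq : IsNilpotent (a ^ 2 - (a ^ 2) ^ 2) := by
    have : a ^ 2 - (a ^ 2) ^ 2 = a * (a - a ^ 3) := by ring
    exact this ▸ (Commute.all _ _).isNilpotent_mul_left h
  obtain ⟨e, he, hae⟩ := exists_isIdempotentElem_isNilpotent_sub hsq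
  exact exists_isHiranoInverse_of_isIdempotentElem he hae

end CommRing

open scoped IsMulCommutative

theorem stmt5 {R : Type*} [Ring R] (a : R) :
    (∃ b, IsHiranoInverse a b) ↔ IsNilpotent (a - a ^ 3) := by
  constructor
  · rintro ⟨b, h⟩
    let T := Subring.closure {a, b}
    have : IsMulCommutative T := Subring.isMulCommutative_closure <| by
      rintro x (rfl | rfl) y (rfl | rfl) <;> simp [h.2.1]
    let a' : T := ⟨a, Subring.subset_closure (by simp)⟩
    let b' : T := ⟨b, Subring.subset_closure (by simp)⟩
    have h' : IsHiranoInverse a' b' := (isHiranoInverse_map_iff T.subtype_injective).1 h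
    simpa using h'.isNilpotent_sub_pow_three.map T.subtype
  · intro h
    let T := Subring.closure {a}
    have : IsMulCommutative T := Subring.isMulCommutative_closure <| by rintro x rfl y rfl; rfl
    let a' : T := ⟨a, Subring.subset_closure rfl⟩
    have h' : IsNilpotent (a' - a' ^ 3) := (IsNilpotent.map_iff T.subtype_injective).1 h
    obtain ⟨b, hb⟩ := exists_isHiranoInverse_of_isNilpotent h'
    exact ⟨b, (isHiranoInverse_map_iff T.subtype_injective).2 hb⟩
end

section
/- If a ∈ R has a Hirano inverse b, then b itself has a Hirano inverse, namely a²b. -/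
/-!
Since `a` and `b` commute, `b = bab` gives `ab² = b`, hence `b·a²b = a²b² = ab`. Then
`b² - b·a²b = b² - ab = -b²(a² - ab)` is nilpotent as a product of commuting elements, one of
them nilpotent, and `a²b·b·a²b = a²b·ab = a²·bab = a²b`.
-/

namespace IsHiranoInverse

variable {R : Type*} [Ring R] {a b : R}

theorem commute (h : IsHiranoInverse a b) : Commute a b := h.2.1

theorem mul_sq (h : IsHiranoInverse a b) : a * b ^ 2 = b := by
  rw [sq, ← mul_assoc, h.commute.eq, ← h.2.2]

theorem sq_mul_sq (h : IsHiranoInverse a b) : a ^ 2 * b ^ 2 = a * b := by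
  rw [sq a, mul_assoc, h.mul_sq]

theorem mul_sq_mul (h : IsHiranoInverse a b) : b * (a ^ 2 * b) = a * b := by
  rw [← mul_assoc, (h.commute.symm.pow_right 2).eq, mul_assoc, ← sq, h.sq_mul_sq]

theorem sq_mul_sub (h : IsHiranoInverse a b) : b ^ 2 * (a ^ 2 - a * b) = a * b - b ^ 2 := by
  have hsq_mul_ab : b ^ 2 * (a * b) = b ^ 2 := by
    rw [← mul_assoc, (h.commute.symm.pow_left 2).eq, h.mul_sq, sq]
  rw [mul_sub, (h.commute.pow_pow 2 2).symm.eq, h.sq_mul_sq, hsq_mul_ab]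

theorem sq_mul (h : IsHiranoInverse a b) : IsHiranoInverse b (a ^ 2 * b) := by
  refine ⟨?_, ((h.commute.symm.pow_right 2).mul_right (Commute.refl b)).eq, ?_⟩
  · have hcomm : Commute (b ^ 2) (a ^ 2 - a * b) :=
      (h.commute.symm.pow_pow 2 2).sub_right
        ((h.commute.symm.pow_left 2).mul_right ((Commute.refl b).pow_left 2))
    have hnil : IsNilpotent (b ^ 2 * (a ^ 2 - a * b)) := hcomm.isNilpotent_mul_left h.1
    rwa [h.sq_mul_sub, ← neg_sub, isNilpotent_neg_iff, ← h.mul_sq_mul] at hnil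
  · calc a ^ 2 * b = a ^ 2 * (b * a * b) := by rw [← h.2.2]
      _ = a ^ 2 * b * (a * b) := by simp only [mul_assoc]
      _ = a ^ 2 * b * b * (a ^ 2 * b) := by rw [mul_assoc (a ^ 2 * b) b, h.mul_sq_mul]

end IsHiranoInverse

theorem stmt6 {R : Type*} [Ring R] (a b : R) (h : IsHiranoInverse a b) :
    IsHiranoInverse b (a ^ 2 * b) := h.sq_mul
end

section
/- Let R be a ring in which 2 is invertible. Then a ∈ R has a Hirano inverse if and only if there exists p ∈ R lying in the double commutant of a with p³ = p and a - p nilpotent. -/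
-- In a commutative ring, x³ - x nilpotent from Hirano-inverse data.
lemma hirano_aux_nil {A : Type*} [CommRing A] (x y : A)
    (h1 : IsNilpotent (x ^ 2 - x * y)) (h3 : y = y * x * y) :
    IsNilpotent (x ^ 3 - x) := by
  have he : (x * y) * (x * y) = x * y := by
    conv_rhs => rw [h3]; ring_nf
    ring
  -- x² - x⁴ = (x² - x*y) * (1 - 2*(x*y) - (x² - x*y)) + ((x*y) - (x*y)*(x*y))
  have hk : x ^ 2 - x ^ 4 =
      (x ^ 2 - x * y) * (1 - 2 * (x * y) - (x ^ 2 - x * y)) := by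
    linear_combination - he
  have h4 : IsNilpotent (x ^ 2 - x ^ 4) := by
    rw [hk]
    obtain ⟨n, hn⟩ := h1
    exact ⟨n, by rw [mul_pow, hn, zero_mul]⟩
  have h5 : (x ^ 3 - x) ^ 2 = (x ^ 2 - x ^ 4) * (1 - x ^ 2) := by ring
  obtain ⟨n, hn⟩ := h4
  refine ⟨2 * n, ?_⟩
  rw [pow_mul, h5, mul_pow, hn, zero_mul]


-- In a commutative ring with 1/2: if x³ - x is nilpotent, there is a tripotent p with x - p nilpotent.
lemma tripotent_aux {A : Type*} [CommRing A] (half : A) (hh : 2 * half = 1)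
    (x : A) (hx : IsNilpotent (x ^ 3 - x)) :
    ∃ p : A, p ^ 3 = p ∧ IsNilpotent (x - p) := by
  set u : A := half * (x ^ 2 + x) with hu
  set v : A := half * (x ^ 2 - x) with hv
  have hnil_mul : ∀ c : A, IsNilpotent (c * (x ^ 3 - x)) := fun c => by
    obtain ⟨n, hn⟩ := hx; exact ⟨n, by rw [mul_pow, hn, mul_zero]⟩
  have huu : u * u - u = (half ^ 2 * (x + 2)) * (x ^ 3 - x) := by
    linear_combination (half * (x ^ 2 + x)) * hh
  have hvv : v * v - v = (half ^ 2 * (x - 2)) * (x ^ 3 - x) := by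
    linear_combination (half * (x ^ 2 - x)) * hh
  have huv : u * v = (half ^ 2 * x) * (x ^ 3 - x) := by ring
  have huv' : IsNilpotent (u * v) := huv ▸ hnil_mul _
  set f : A →+* A ⧸ nilradical A := Ideal.Quotient.mk (nilradical A) with hf
  have hker : ∀ z ∈ RingHom.ker f, IsNilpotent z := by
    intro z hz
    rwa [hf, Ideal.mk_ker, mem_nilradical] at hz
  have hzero : ∀ z : A, IsNilpotent z → f z = 0 := fun z hz =>
    Ideal.Quotient.eq_zero_iff_mem.mpr (mem_nilradical.mpr hz)
  have hfu : IsIdempotentElem (f u) := by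
    have : f (u * u - u) = 0 := hzero _ (huu ▸ hnil_mul _)
    rw [map_sub, map_mul, sub_eq_zero] at this
    exact this
  have hfv : IsIdempotentElem (f v) := by
    have : f (v * v - v) = 0 := hzero _ (hvv ▸ hnil_mul _)
    rw [map_sub, map_mul, sub_eq_zero] at this
    exact this
  obtain ⟨e₂, he₂, hfe₂⟩ :=
    exists_isIdempotentElem_eq_of_ker_isNilpotent f hker (f v) ⟨v, rfl⟩ hfv
  have horth1 : f u * f e₂ = 0 := by
    rw [hfe₂, ← map_mul]; exact hzero _ huv'
  have horth2 : f e₂ * f u = 0 := by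
    rw [hfe₂, ← map_mul, mul_comm]; exact hzero _ huv'
  obtain ⟨e₁, he₁, hfe₁, h12, h21⟩ :=
    exists_isIdempotentElem_mul_eq_zero_of_ker_isNilpotent f hker (f u)
      ⟨u, rfl⟩ hfu e₂ he₂ horth1 horth2
  refine ⟨e₁ - e₂, ?_, ?_⟩
  · have h1 := he₁.eq
    have h2 := he₂.eq
    linear_combination (e₁ + 1) * h1 - (e₂ + 1) * h2 - 3 * (e₁ - e₂) * h12
  · have : f (x - (e₁ - e₂)) = 0 := by
      rw [map_sub, map_sub, hfe₁, hfe₂]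
      have hx' : u - v = x := by linear_combination x * hh
      rw [← hx']
      push_cast [map_sub]
      ring
    exact hker _ this


-- In a commutative ring: a tripotent p with x - p nilpotent yields a Hirano inverse of x.
lemma hirano_aux_inv {A : Type*} [CommRing A] (x p : A) (hp3 : p ^ 3 = p)
    (hn : IsNilpotent (x - p)) :
    ∃ b : A, IsNilpotent (x ^ 2 - x * b) ∧ b = b * x * b := by
  obtain ⟨N, hN⟩ := hn
  set s : A := ∑ i ∈ Finset.range N, (-(p * (x - p))) ^ i with hs
  have hmN : (-(p * (x - p))) ^ N = 0 := by
    rw [neg_pow, mul_pow, hN, mul_zero, mul_zero]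
  have hgs := geom_sum_mul (-(p * (x - p))) N
  rw [← hs, hmN] at hgs
  have hs1 : s * (1 + p * (x - p)) = 1 := by linear_combination - hgs
  set b : A := s * p with hb
  have key : x * b = p ^ 2 := by
    rw [hb]
    linear_combination (p ^ 2) * hs1 - (s * (x - p)) * hp3
  refine ⟨b, ?_, ?_⟩
  · have : x ^ 2 - x * b = (x - p) * (x + p) := by rw [key]; ring
    rw [this]
    exact ⟨N, by rw [mul_pow, hN, zero_mul]⟩
  · have h1 : b * x * b = p ^ 2 * b := by rw [show b * x * b = x * b * b by ring, key]
    rw [h1, hb]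
    linear_combination - s * hp3


theorem stmt7 {R : Type*} [Ring R] (h2 : IsUnit (2 : R)) (a : R) :
    (∃ b, IsHiranoInverse a b) ↔
    (∃ p : R, (∀ y : R, a * y = y * a → p * y = y * p) ∧ p ^ 3 = p ∧
      IsNilpotent (a - p)) := by
  constructor
  · rintro ⟨b, hnil, hcomm, hbab⟩
    obtain ⟨n₀, hn₀⟩ := hnil
    -- Step 1: a ^ 3 - a is nilpotent, working in the commutative subring generated by a, b
    have haa3 : IsNilpotent (a ^ 3 - a) := by
      have hpair : ∀ x ∈ ({a, b} : Set R), ∀ y ∈ ({a, b} : Set R), x * y = y * x := by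
        rintro x (rfl | rfl) y (rfl | rfl)
        exacts [rfl, hcomm, hcomm.symm, rfl]
      letI : CommRing (Subring.closure ({a, b} : Set R)) :=
        Subring.closureCommRingOfComm hpair
      have hamem : a ∈ Subring.closure ({a, b} : Set R) := Subring.subset_closure (by simp)
      have hbmem : b ∈ Subring.closure ({a, b} : Set R) := Subring.subset_closure (by simp)
      have h1 : IsNilpotent ((⟨a, hamem⟩ : Subring.closure ({a, b} : Set R)) ^ 2 -
          ⟨a, hamem⟩ * ⟨b, hbmem⟩) :=
        ⟨n₀, Subtype.ext (by push_cast; exact hn₀)⟩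
      have h3 : (⟨b, hbmem⟩ : Subring.closure ({a, b} : Set R)) =
          ⟨b, hbmem⟩ * ⟨a, hamem⟩ * ⟨b, hbmem⟩ :=
        Subtype.ext (by push_cast; exact hbab)
      obtain ⟨n, hn⟩ := hirano_aux_nil _ _ h1 h3
      refine ⟨n, ?_⟩
      have := congrArg Subtype.val hn
      push_cast at this
      exact this
    -- Step 2: build the tripotent in the commutative subring generated by a and 2⁻¹
    obtain ⟨n₁, hn₁⟩ := haa3
    have h2c : (2 : R) * ((h2.unit⁻¹ : Rˣ) : R) = 1 := by
      have := h2.unit.mul_inv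
      rwa [IsUnit.unit_spec] at this
    have hccentral : ∀ y : R, ((h2.unit⁻¹ : Rˣ) : R) * y = y * ((h2.unit⁻¹ : Rˣ) : R) := by
      intro y
      have c2 : Commute (2 : R) y := by
        have := (Commute.one_left y).add_left (Commute.one_left y)
        rwa [one_add_one_eq_two] at this
      have cu : Commute ((h2.unit : Rˣ) : R) y := by rwa [IsUnit.unit_spec]
      exact (cu.units_inv_left).eq
    have hpair : ∀ x ∈ ({a, ((h2.unit⁻¹ : Rˣ) : R)} : Set R),
        ∀ y ∈ ({a, ((h2.unit⁻¹ : Rˣ) : R)} : Set R), x * y = y * x := by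
      rintro x (rfl | rfl) y (rfl | rfl)
      exacts [rfl, (hccentral x).symm, hccentral y, rfl]
    letI : CommRing (Subring.closure ({a, ((h2.unit⁻¹ : Rˣ) : R)} : Set R)) :=
      Subring.closureCommRingOfComm hpair
    have hamem : a ∈ Subring.closure ({a, ((h2.unit⁻¹ : Rˣ) : R)} : Set R) :=
      Subring.subset_closure (by simp)
    have hcmem : ((h2.unit⁻¹ : Rˣ) : R) ∈
        Subring.closure ({a, ((h2.unit⁻¹ : Rˣ) : R)} : Set R) :=
      Subring.subset_closure (by simp)
    have hh : (2 : Subring.closure ({a, ((h2.unit⁻¹ : Rˣ) : R)} : Set R)) * ⟨_, hcmem⟩ = 1 :=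
      Subtype.ext (by push_cast; exact h2c)
    have hx : IsNilpotent ((⟨a, hamem⟩ :
        Subring.closure ({a, ((h2.unit⁻¹ : Rˣ) : R)} : Set R)) ^ 3 - ⟨a, hamem⟩) :=
      ⟨n₁, Subtype.ext (by push_cast; exact hn₁)⟩
    obtain ⟨p, hp3, hpn⟩ := tripotent_aux _ hh _ hx
    refine ⟨(p : R), ?_, ?_, ?_⟩
    · intro y hy
      have hmem : (p : R) ∈ Subring.centralizer ({y} : Set R) := by
        apply Subring.closure_le.mpr _ p.2
        rintro z (rfl | rfl)
        · exact Subring.mem_centralizer_iff.mpr (by rintro g rfl; exact hy.symm)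
        · exact Subring.mem_centralizer_iff.mpr (by rintro g rfl; exact (hccentral g).symm)
      exact (Subring.mem_centralizer_iff.mp hmem y rfl).symm
    · have := congrArg Subtype.val hp3
      push_cast at this
      exact this
    · obtain ⟨n, hn⟩ := hpn
      refine ⟨n, ?_⟩
      have := congrArg Subtype.val hn
      push_cast at this
      exact this
  · rintro ⟨p, hpcomm, hp3, hpn⟩
    obtain ⟨n₀, hn₀⟩ := hpn
    have hpa : p * a = a * p := hpcomm a rfl
    have hpair : ∀ x ∈ ({a, p} : Set R), ∀ y ∈ ({a, p} : Set R), x * y = y * x := by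
      rintro x (rfl | rfl) y (rfl | rfl)
      exacts [rfl, hpa.symm, hpa, rfl]
    letI : CommRing (Subring.closure ({a, p} : Set R)) :=
      Subring.closureCommRingOfComm hpair
    have hamem : a ∈ Subring.closure ({a, p} : Set R) := Subring.subset_closure (by simp)
    have hpmem : p ∈ Subring.closure ({a, p} : Set R) := Subring.subset_closure (by simp)
    have hq3 : (⟨p, hpmem⟩ : Subring.closure ({a, p} : Set R)) ^ 3 = ⟨p, hpmem⟩ :=
      Subtype.ext (by push_cast; exact hp3)
    have hqn : IsNilpotent ((⟨a, hamem⟩ : Subring.closure ({a, p} : Set R)) - ⟨p, hpmem⟩) :=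
      ⟨n₀, Subtype.ext (by push_cast; exact hn₀)⟩
    obtain ⟨b, hb1, hb2⟩ := hirano_aux_inv _ _ hq3 hqn
    refine ⟨(b : R), ?_, ?_, ?_⟩
    · obtain ⟨n, hn⟩ := hb1
      refine ⟨n, ?_⟩
      have := congrArg Subtype.val hn
      push_cast at this
      exact this
    · have := congrArg Subtype.val
        (mul_comm (⟨a, hamem⟩ : Subring.closure ({a, p} : Set R)) b)
      push_cast at this
      exact this
    · have := congrArg Subtype.val hb2
      push_cast at this
      exact this
end

section
/- Let R be a ring and a, b, c ∈ R with aba = aca. Then for every natural number n, (ba - (ba)³)^{n+1} = b(ac - (ac)³)ⁿ(a - ababa). -/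
private lemma pow_key {R : Type*} [Ring R] (a b c : R) (h : a * b * a = a * c * a) :
    ∀ k : ℕ, (a * b) ^ k * a = (a * c) ^ k * a := by
  intro k
  induction k with
  | zero => simp
  | succ k ih =>
    have : (a * b) ^ (k + 1) * a = (a * b) ^ k * (a * c * a) := by
      rw [← h]; noncomm_ring
    rw [this, show (a * b) ^ k * (a * c * a) = ((a * b) ^ k * a) * (c * a) by noncomm_ring,
      ih]
    noncomm_ring

private lemma key {R : Type*} [Ring R] (a b c : R) (h : a * b * a = a * c * a) :
    (a - a * b * a * b * a) * (b * a - (b * a) ^ 3) =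
      (a * c - (a * c) ^ 3) * (a - a * b * a * b * a) := by
  have e2 := pow_key a b c h 2
  have e3 := pow_key a b c h 3
  have e5 := pow_key a b c h 5
  calc (a - a * b * a * b * a) * (b * a - (b * a) ^ 3)
      = a * b * a - 2 * ((a * b) ^ 3 * a) + (a * b) ^ 5 * a := by noncomm_ring
    _ = a * c * a - 2 * ((a * c) ^ 3 * a) + (a * c) ^ 5 * a := by rw [h, e3, e5]
    _ = a * c * a - a * c * ((a * c) ^ 2 * a) - (a * c) ^ 3 * a
        + (a * c) ^ 3 * ((a * c) ^ 2 * a) := by noncomm_ring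
    _ = a * c * a - a * c * ((a * b) ^ 2 * a) - (a * c) ^ 3 * a
        + (a * c) ^ 3 * ((a * b) ^ 2 * a) := by rw [e2]
    _ = (a * c - (a * c) ^ 3) * (a - a * b * a * b * a) := by noncomm_ring

theorem stmt11 {R : Type*} [Ring R] (a b c : R) (h : a * b * a = a * c * a) (n : ℕ) :
    (b * a - (b * a) ^ 3) ^ (n + 1) =
      b * (a * c - (a * c) ^ 3) ^ n * (a - a * b * a * b * a) := by
  induction n with
  | zero => simp; noncomm_ring
  | succ n ih =>
    calc (b * a - (b * a) ^ 3) ^ (n + 2)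
        = (b * a - (b * a) ^ 3) ^ (n + 1) * (b * a - (b * a) ^ 3) := by rw [pow_succ]
      _ = b * (a * c - (a * c) ^ 3) ^ n *
            ((a - a * b * a * b * a) * (b * a - (b * a) ^ 3)) := by rw [ih, mul_assoc]
      _ = b * (a * c - (a * c) ^ 3) ^ n *
            ((a * c - (a * c) ^ 3) * (a - a * b * a * b * a)) := by rw [key a b c h]
      _ = b * (a * c - (a * c) ^ 3) ^ (n + 1) * (a - a * b * a * b * a) := by
          rw [pow_succ]; noncomm_ring
end

section
/- Let R be a ring and a, b, c ∈ R with aba = aca. If ac has a Hirano inverse, then ba has a Hirano inverse. -/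
theorem stmt12 {R : Type*} [Ring R] (a b c : R) (h : a * b * a = a * c * a)
    (hac : ∃ y, IsHiranoInverse (a * c) y) : ∃ y, IsHiranoInverse (b * a) y := by
  obtain ⟨y, ⟨n, hn⟩, hc, hy⟩ := hac
  -- basic facts
  have h1 : a * c * (y * y) = y := by
    have e1 : a * c * (y * y) = (a * c * y) * y := by noncomm_ring
    rw [e1, hc, ← hy]
  have haby : a * b * y = a * c * y := by
    conv_lhs => rw [← h1]
    conv_rhs => rw [← h1]
    calc a * b * (a * c * (y * y)) = (a * b * a) * (c * (y * y)) := by noncomm_ring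
      _ = (a * c * a) * (c * (y * y)) := by rw [h]
      _ = a * c * (a * c * (y * y)) := by noncomm_ring
  have haby2 : a * b * (y * y) = y := by
    calc a * b * (y * y) = (a * b * y) * y := by noncomm_ring
      _ = (a * c * y) * y := by rw [haby]
      _ = a * c * (y * y) := by noncomm_ring
      _ = y := h1
  have hyya : (y * y) * (a * c) = y := by
    calc (y * y) * (a * c) = y * (y * (a * c)) := by noncomm_ring
      _ = y * (a * c * y) := by rw [← hc]
      _ = (y * (a * c)) * y := by noncomm_ring
      _ = (a * c * y) * y := by rw [← hc]
      _ = a * c * (y * y) := by noncomm_ring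
      _ = y := h1
  set z := b * (y * y) * a with hz
  have hfz : (b * a) * z = b * y * a := by
    calc (b * a) * z = b * (a * b * (y * y)) * a := by rw [hz]; noncomm_ring
      _ = b * y * a := by rw [haby2]
  have hzf : z * (b * a) = b * y * a := by
    calc z * (b * a) = b * (y * y) * (a * b * a) := by rw [hz]; noncomm_ring
      _ = b * (y * y) * (a * c * a) := by rw [h]
      _ = b * ((y * y) * (a * c)) * a := by noncomm_ring
      _ = b * y * a := by rw [hyya]
  have hzfz : z * (b * a) * z = z := by
    calc z * (b * a) * z = (b * y * a) * z := by rw [hzf]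
      _ = b * (y * (a * b * (y * y))) * a := by rw [hz]; noncomm_ring
      _ = b * (y * y) * a := by rw [haby2]
  set u := a * c - y with hu
  set v := (a * c) ^ 2 - (a * c) * y with hv
  have habu : a * b * u = v := by
    calc a * b * u = a * b * (a * c) - a * b * y := by rw [hu]; noncomm_ring
      _ = (a * b * a) * c - a * b * y := by noncomm_ring
      _ = (a * c * a) * c - a * c * y := by rw [h, haby]
      _ = v := by rw [hv]; noncomm_ring
  have key : ∀ k : ℕ, (b * u * a) ^ (k + 1) = b * (u * v ^ k) * a := by
    intro k
    induction k with
    | zero => simp [pow_succ]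
    | succ m ih =>
      calc (b * u * a) ^ (m + 2) = (b * u * a) ^ (m + 1) * (b * u * a) := by rw [pow_succ]
        _ = (b * (u * v ^ m) * a) * (b * u * a) := by rw [ih]
        _ = b * (u * (v ^ m * (a * b * u))) * a := by noncomm_ring
        _ = b * (u * (v ^ m * v)) * a := by rw [habu]
        _ = b * (u * v ^ (m + 1)) * a := by rw [pow_succ]
  have hsq : (b * a) ^ 2 - (b * a) * z = b * u * a := by
    have e2 : (b * a) ^ 2 = b * (a * b * a) := by noncomm_ring
    rw [e2, h, hfz, hu]
    noncomm_ring
  refine ⟨z, ⟨n + 1, ?_⟩, hfz.trans hzf.symm, hzfz.symm⟩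
  rw [hsq, key n, hn, mul_zero, mul_zero, zero_mul]
end

section
/- Let R be a ring and a, b ∈ R. If ab has a Hirano inverse, then ba has a Hirano inverse. -/
/-!
If `y` is a Hirano inverse of `x`, then `(x - y)² = (x² - xy)(1 - y²)` is a product of commuting
factors the first of which is nilpotent, so `x - y` is nilpotent. For `x = ab` the candidate
inverse of `ba` is `b y² a` (Cline's formula): then `(ba)² - ba · b y² a = b (x - y) a`, which is
nilpotent because `(x - y) a b = (x - y) x` is.
-/

theorem IsNilpotent.swap_mul {M : Type*} [MonoidWithZero M] {x y : M}
    (h : IsNilpotent (x * y)) : IsNilpotent (y * x) := by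
  obtain ⟨n, hn⟩ := h
  refine ⟨n + 1, ?_⟩
  rw [pow_succ', mul_assoc, ← mul_pow_mul, hn, zero_mul, mul_zero]

namespace IsHiranoInverse

variable {R : Type*} [Ring R]

section

variable {x y : R}

theorem commute_s13 (h : IsHiranoInverse x y) : Commute x y := h.2.1

theorem mul_mul_self (h : IsHiranoInverse x y) : x * (y * y) = y := by
  rw [← mul_assoc, h.commute_s13.eq, ← h.2.2]

theorem mul_self_mul (h : IsHiranoInverse x y) : y * y * x = y := by
  rw [mul_assoc, ← h.commute_s13.eq, ← mul_assoc, ← h.2.2]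

theorem sub_sq (h : IsHiranoInverse x y) : (x - y) ^ 2 = (x ^ 2 - x * y) * (1 - y ^ 2) := by
  have hxxyy : x * x * (y * y) = x * y := by rw [mul_assoc, h.mul_mul_self]
  have hxyyy : x * y * (y * y) = y * y := by
    rw [mul_assoc, ← mul_assoc y, ← mul_assoc x, h.mul_mul_self]
  calc (x - y) ^ 2 = x * x - x * y - y * x + y * y := by noncomm_ring
    _ = x * x - x * y - (x * x * (y * y) - x * y * (y * y)) := by
      rw [hxxyy, hxyyy, h.commute_s13.eq]; abel
    _ = (x ^ 2 - x * y) * (1 - y ^ 2) := by noncomm_ring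

theorem isNilpotent_sub (h : IsHiranoInverse x y) : IsNilpotent (x - y) := by
  have hcomm : Commute (x ^ 2 - x * y) (1 - y ^ 2) := by
    have hx : Commute x (1 - y ^ 2) := (Commute.one_right x).sub_right (h.commute_s13.pow_right 2)
    have hy : Commute y (1 - y ^ 2) := (Commute.one_right y).sub_right ((Commute.refl y).pow_right 2)
    exact (hx.pow_left 2).sub_left (hx.mul_left hy)
  exact IsNilpotent.of_pow (m := 2) (h.sub_sq ▸ hcomm.isNilpotent_mul_right h.1)

end

theorem swap_mul {a b y : R} (h : IsHiranoInverse (a * b) y) :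
    IsHiranoInverse (b * a) (b * (y * y) * a) := by
  have hleft : b * a * (b * (y * y) * a) = b * y * a := calc
    _ = b * (a * b * (y * y)) * a := by simp only [mul_assoc]
    _ = b * y * a := by rw [h.mul_mul_self]
  have hright : b * (y * y) * a * (b * a) = b * y * a := calc
    _ = b * (y * y * (a * b)) * a := by simp only [mul_assoc]
    _ = b * y * a := by rw [h.mul_self_mul]
  refine ⟨?_, hleft.trans hright.symm, ?_⟩
  · have hdiff : (b * a) ^ 2 - b * a * (b * (y * y) * a) = b * ((a * b - y) * a) := by
      rw [hleft, pow_two]; noncomm_ring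
    have hnil : IsNilpotent ((a * b - y) * a * b) := by
      rw [mul_assoc]
      exact ((Commute.refl _).sub_left h.commute_s13.symm).isNilpotent_mul_right h.isNilpotent_sub
    rw [hdiff]
    exact hnil.swap_mul
  · calc b * (y * y) * a
        = b * ((y * y * (a * b)) * (a * b * (y * y))) * a := by
          rw [h.mul_self_mul, h.mul_mul_self]
      _ = b * (y * y) * a * (b * a) * (b * (y * y) * a) := by simp only [mul_assoc]

end IsHiranoInverse

theorem stmt13 {R : Type*} [Ring R] (a b : R)
    (h : ∃ y, IsHiranoInverse (a * b) y) : ∃ y, IsHiranoInverse (b * a) y := by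
  obtain ⟨y, hy⟩ := h
  exact ⟨_, hy.swap_mul⟩
end

section
/- Let R be a ring, a, b ∈ R, and k ≥ 1. If (ab)^k has a Hirano inverse, then (ba)^k has a Hirano inverse. -/
private lemma pow_mul_swap {R : Type*} [Ring R] (p u : R) (n : ℕ) :
    (p * u) ^ (n + 1) = p * (u * p) ^ n * u := by
  induction n with
  | zero => simp [pow_succ]
  | succ n ih => rw [pow_succ, ih, pow_succ]; noncomm_ring

private lemma nilpotent_swap {R : Type*} [Ring R] (u p : R) (h : IsNilpotent (u * p)) :
    IsNilpotent (p * u) := by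
  obtain ⟨m, hm⟩ := h
  exact ⟨m + 1, by rw [pow_mul_swap, hm, mul_zero, zero_mul]⟩

private lemma aux {R : Type*} [Ring R] (a b : R) : ∀ n : ℕ,
    b * (a * b) ^ n * a = b * a * (b * a) ^ n
  | 0 => by simp
  | n + 1 => by
    rw [pow_succ, pow_succ']
    calc b * ((a * b) ^ n * (a * b)) * a = (b * (a * b) ^ n * a) * (b * a) := by noncomm_ring
      _ = b * a * (b * a) ^ n * (b * a) := by rw [aux a b n]
      _ = b * a * ((b * a) ^ n * (b * a)) := by noncomm_ring
      _ = b * a * ((b * a) * (b * a) ^ n) := by rw [← pow_succ, pow_succ']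

private lemma cline {R : Type*} [Ring R] (u v y : R) (h : IsHiranoInverse (u * v) y) :
    IsHiranoInverse (v * u) (v * y * y * u) := by
  obtain ⟨hn, hc, hy⟩ := h
  have hxy2 : u * v * (y * y) = y := by
    rw [← mul_assoc, hc, mul_assoc, ← mul_assoc, ← hy]
  have hyyx : y * y * (u * v) = y := by
    calc y * y * (u * v) = y * (y * (u * v)) := by noncomm_ring
      _ = y * (u * v * y) := by rw [hc]
      _ = y * (u * v) * y := by noncomm_ring
      _ = y := hy.symm
  refine ⟨?_, ?_, ?_⟩
  · have key : (v * u) ^ 2 - (v * u) * (v * y * y * u) = (v * (u * v - y)) * u := by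
      have h1 : (v * u) * (v * y * y * u) = v * (u * v * (y * y)) * u := by
        noncomm_ring
      rw [h1, hxy2, sq]
      noncomm_ring
    rw [key]
    apply nilpotent_swap
    have : u * (v * (u * v - y)) = (u * v) ^ 2 - (u * v) * y := by
      rw [sq]; noncomm_ring
    rw [this]; exact hn
  · have h1 : (v * u) * (v * y * y * u) = v * (u * v * (y * y)) * u := by
      noncomm_ring
    have h2 : (v * y * y * u) * (v * u) = v * (y * y * (u * v)) * u := by
      noncomm_ring
    rw [h1, h2, hxy2, hyyx]
  · have h1 : (v * y * y * u) * (v * u) * (v * y * y * u)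
        = v * (y * y * (u * v) * (u * v * (y * y))) * u := by
      noncomm_ring
    rw [h1, hyyx, hxy2]
    noncomm_ring

theorem stmt14 {R : Type*} [Ring R] (a b : R) (k : ℕ) (hk : 1 ≤ k)
    (h : ∃ y, IsHiranoInverse ((a * b) ^ k) y) :
    ∃ y, IsHiranoInverse ((b * a) ^ k) y := by
  obtain ⟨y, hy⟩ := h
  obtain ⟨n, rfl⟩ := Nat.exists_eq_add_of_le hk
  set u := a with hu
  set v := b * (a * b) ^ n with hv
  have huv : u * v = (a * b) ^ (1 + n) := by
    rw [hu, hv, ← mul_assoc, pow_add, pow_one]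
  have hvu : v * u = (b * a) ^ (1 + n) := by
    rw [hu, hv, pow_add, pow_one]
    exact aux a b n
  refine ⟨v * y * y * u, ?_⟩
  rw [← hvu]
  exact cline u v y (by rw [huv]; exact hy)
end

section
/- Let R be a ring and let a, b ∈ R have Hirano inverses with ab = ba. Then ab has a Hirano inverse. -/
section Aux

variable {S : Type*} [CommRing S]

lemma nmul (r : S) {t : S} (h : IsNilpotent t) : IsNilpotent (r * t) := by
  obtain ⟨k, hk⟩ := h
  exact ⟨k, by rw [mul_pow, hk, mul_zero]⟩

lemma nadd {s t : S} (hs : IsNilpotent s) (ht : IsNilpotent t) : IsNilpotent (s + t) :=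
  (Commute.all s t).isNilpotent_add hs ht

/-- In a commutative ring, a Hirano-type identity forces `a - a^3` nilpotent. -/
lemma hirano_nilp (a x : S) (h1 : IsNilpotent (a ^ 2 - a * x))
    (h3 : x = x * a * x) : IsNilpotent (a - a ^ 3) := by
  have hee : (a * x) * (a * x) = a * x := by
    calc (a * x) * (a * x) = a * (x * a * x) := by ring
    _ = a * x := by rw [← h3]
  have hterm1 : IsNilpotent (a * (a ^ 2 - a * x)) := nmul a h1
  have hterm2 : IsNilpotent (a * (a * x - 1)) := by
    have hsq : (a * (a * x - 1)) ^ 2 = (1 - a * x) * (a ^ 2 - a * x) := by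
      linear_combination (a ^ 2 - 1) * hee
    obtain ⟨k, hk⟩ := nmul (1 - a * x) h1
    exact ⟨2 * k, by rw [pow_mul, hsq, hk]⟩
  have hsum : IsNilpotent (a * (a ^ 2 - a * x) + a * (a * x - 1)) := nadd hterm1 hterm2
  have : a - a ^ 3 = -(a * (a ^ 2 - a * x) + a * (a * x - 1)) := by ring
  rw [this]
  exact hsum.neg

/-- In a commutative ring, if `c - c^3` is nilpotent then `c` has a Hirano inverse. -/
lemma nilp_hirano (c : S) (h : IsNilpotent (c - c ^ 3)) :
    ∃ y : S, IsNilpotent (c ^ 2 - c * y) ∧ y = y * c * y := by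
  have hnil : IsNilpotent (c ^ 2 - (c ^ 2) ^ 2) := by
    have : c ^ 2 - (c ^ 2) ^ 2 = c * (c - c ^ 3) := by ring
    rw [this]
    exact nmul c h
  -- lift the idempotent `c^2 mod (c^2 - (c^2)^2)`
  set I : Ideal S := Ideal.span {c ^ 2 - (c ^ 2) ^ 2} with hI
  have hker : ∀ z ∈ RingHom.ker (Ideal.Quotient.mk I), IsNilpotent z := by
    intro z hz
    rw [RingHom.mem_ker, Ideal.Quotient.eq_zero_iff_mem, hI,
      Ideal.mem_span_singleton'] at hz
    obtain ⟨r, hr⟩ := hz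
    rw [← hr]
    exact nmul r hnil
  have hidem : IsIdempotentElem (Ideal.Quotient.mk I (c ^ 2)) := by
    unfold IsIdempotentElem
    rw [← map_mul, Ideal.Quotient.eq]
    have : c ^ 2 * c ^ 2 - c ^ 2 = -(c ^ 2 - (c ^ 2) ^ 2) := by ring
    rw [this, hI]
    exact neg_mem (Ideal.mem_span_singleton_self _)
  obtain ⟨f, hf, hfe⟩ := exists_isIdempotentElem_eq_of_ker_isNilpotent
    (Ideal.Quotient.mk I) hker _ ⟨c ^ 2, rfl⟩ hidem
  have hfen : IsNilpotent (f - c ^ 2) := by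
    apply hker
    rw [RingHom.mem_ker, map_sub, hfe, sub_self]
  -- n := c^2*f - f is nilpotent; 1 + n is a unit
  have hn : IsNilpotent (c ^ 2 * f - f) := by
    have : c ^ 2 * f - f = (-f) * (f - c ^ 2) + (f * f - f) := by ring
    rw [this, hf.eq, sub_self, add_zero]
    exact nmul (-f) hfen
  obtain ⟨u, hu⟩ := hn.isUnit_one_add
  set w : S := ↑u⁻¹ with hw
  have huw : (1 + (c ^ 2 * f - f)) * w = 1 := by
    rw [hw, ← hu]
    exact u.mul_inv
  have hcy : c * (c * f * w) = f := by
    have h2 : c ^ 2 * f = f * (1 + (c ^ 2 * f - f)) := by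
      linear_combination (1 - c ^ 2) * hf.eq
    have key : (c ^ 2 * f) * w = f := by
      rw [h2, mul_assoc, huw, mul_one]
    calc c * (c * f * w) = c ^ 2 * f * w := by ring
    _ = f := key
  refine ⟨c * f * w, ?_, ?_⟩
  · rw [hcy]
    have : c ^ 2 - f = -(f - c ^ 2) := by ring
    rw [this]
    exact hfen.neg
  · have : c * f * w * c * (c * f * w) = c * f * w * f := by
      rw [mul_assoc (c * f * w) c, hcy]
    rw [this]
    calc c * f * w = c * (f * f) * w := by rw [hf.eq]
    _ = c * f * w * f := by ring

end Aux

section Transfer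

variable {R : Type*} [Ring R]

/-- From a Hirano inverse in a (possibly noncommutative) ring, `a - a^3` is nilpotent. -/
lemma nilp_of_hirano (a x : R) (h : IsHiranoInverse a x) : IsNilpotent (a - a ^ 3) := by
  obtain ⟨h1, h2, h3⟩ := h
  let T := Subring.closure ({a, x} : Set R)
  letI : CommRing T := Subring.closureCommRingOfComm (by
    rintro p (rfl | rfl) q (rfl | rfl)
    · rfl
    · exact h2
    · exact h2.symm
    · rfl)
  have haT : a ∈ T := Subring.subset_closure (by left; rfl)
  have hxT : x ∈ T := Subring.subset_closure (by right; rfl)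
  have h1' : IsNilpotent ((⟨a, haT⟩ : T) ^ 2 - ⟨a, haT⟩ * ⟨x, hxT⟩) := by
    obtain ⟨k, hk⟩ := h1
    refine ⟨k, ?_⟩
    apply Subtype.ext
    push_cast
    exact hk
  have h3' : (⟨x, hxT⟩ : T) = ⟨x, hxT⟩ * ⟨a, haT⟩ * ⟨x, hxT⟩ := by
    apply Subtype.ext
    push_cast
    exact h3
  obtain ⟨k, hk⟩ := hirano_nilp (⟨a, haT⟩ : T) ⟨x, hxT⟩ h1' h3'
  refine ⟨k, ?_⟩
  have := congrArg (Subring.subtype T) hk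
  push_cast at this
  simpa using this

end Transfer

theorem stmt15 {R : Type*} [Ring R] (a b : R) (hab : a * b = b * a)
    (ha : ∃ x, IsHiranoInverse a x) (hb : ∃ y, IsHiranoInverse b y) :
    ∃ z, IsHiranoInverse (a * b) z := by
  obtain ⟨x, hx⟩ := ha
  obtain ⟨y, hy⟩ := hb
  have hna : IsNilpotent (a - a ^ 3) := nilp_of_hirano a x hx
  have hnb : IsNilpotent (b - b ^ 3) := nilp_of_hirano b y hy
  let S := Subring.closure ({a, b} : Set R)
  letI : CommRing S := Subring.closureCommRingOfComm (by
    rintro p (rfl | rfl) q (rfl | rfl)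
    · rfl
    · exact hab
    · exact hab.symm
    · rfl)
  have haS : a ∈ S := Subring.subset_closure (by left; rfl)
  have hbS : b ∈ S := Subring.subset_closure (by right; rfl)
  have habS : a * b ∈ S := mul_mem haS hbS
  have hna' : IsNilpotent ((⟨a, haS⟩ : S) - ⟨a, haS⟩ ^ 3) := by
    obtain ⟨k, hk⟩ := hna
    exact ⟨k, Subtype.ext (by push_cast; exact hk)⟩
  have hnb' : IsNilpotent ((⟨b, hbS⟩ : S) - ⟨b, hbS⟩ ^ 3) := by
    obtain ⟨k, hk⟩ := hnb
    exact ⟨k, Subtype.ext (by push_cast; exact hk)⟩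
  have hnc : IsNilpotent ((⟨a * b, habS⟩ : S) - ⟨a * b, habS⟩ ^ 3) := by
    have hab' : (⟨a * b, habS⟩ : S) = ⟨a, haS⟩ * ⟨b, hbS⟩ := rfl
    rw [hab']
    have hdecomp : (⟨a, haS⟩ : S) * ⟨b, hbS⟩ - ((⟨a, haS⟩ : S) * ⟨b, hbS⟩) ^ 3 =
        ((⟨a, haS⟩ : S) - ⟨a, haS⟩ ^ 3) * ⟨b, hbS⟩ +
        (⟨a, haS⟩ : S) ^ 3 * ((⟨b, hbS⟩ : S) - ⟨b, hbS⟩ ^ 3) := by ring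
    rw [hdecomp]
    exact nadd (by rw [mul_comm]; exact nmul _ hna') (nmul _ hnb')
  obtain ⟨y', h1', h3'⟩ := nilp_hirano (⟨a * b, habS⟩ : S) hnc
  refine ⟨(y' : R), ?_, ?_, ?_⟩
  · obtain ⟨k, hk⟩ := h1'
    refine ⟨k, ?_⟩
    have := congrArg (Subring.subtype S) hk
    push_cast at this
    simpa using this
  · have hcomm : (⟨a * b, habS⟩ : S) * y' = y' * ⟨a * b, habS⟩ := mul_comm _ _
    have := congrArg (Subring.subtype S) hcomm
    push_cast at this
    simpa using this
  · have := congrArg (Subring.subtype S) h3'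
    push_cast at this
    simpa using this
end

section
/- If a ∈ R has a Hirano inverse b, then for every n ≥ 1, aⁿ has Hirano inverse bⁿ. -/
/-
Since `a` and `b` commute, `(aⁿ)² - aⁿbⁿ = (a²)ⁿ - (ab)ⁿ` is a multiple of the nilpotent
`a² - ab` by an element commuting with it, and `bⁿ = (bab)ⁿ = bⁿaⁿbⁿ`.
-/

theorem Commute.isNilpotent_pow_sub_pow {R : Type*} [Ring R] {x y : R} (hxy : Commute x y)
    (h : IsNilpotent (x - y)) (n : ℕ) : IsNilpotent (x ^ n - y ^ n) := by
  have hx : Commute (x - y) x := (Commute.refl x).sub_left hxy.symm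
  have hy : Commute (x - y) y := hxy.sub_left (Commute.refl y)
  rw [← hxy.mul_geom_sum₂ n]
  exact Commute.isNilpotent_mul_right
    (Commute.sum_right _ _ _ fun i _ => (hx.pow_right i).mul_right (hy.pow_right _)) h

theorem stmt16_general {R : Type*} [Ring R] (a b : R) (h : IsHiranoInverse a b)
    (n : ℕ) : IsHiranoInverse (a ^ n) (b ^ n) := by
  obtain ⟨hnil, hab : Commute a b, hbab⟩ := h
  refine ⟨?_, hab.pow_pow n n, ?_⟩
  · have hsq : Commute (a ^ 2) (a * b) :=
      ((Commute.refl a).pow_left 2).mul_right (hab.pow_left 2)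
    rw [← pow_mul, mul_comm, pow_mul, ← hab.mul_pow]
    exact hsq.isNilpotent_pow_sub_pow hnil n
  · calc b ^ n = (b * a * b) ^ n := by rw [← hbab]
      _ = b ^ n * a ^ n * b ^ n := by
        rw [((Commute.refl b).mul_left hab).mul_pow, hab.symm.mul_pow]

theorem stmt16 {R : Type*} [Ring R] (a b : R) (h : IsHiranoInverse a b)
    (n : ℕ) (hn : 1 ≤ n) : IsHiranoInverse (a ^ n) (b ^ n) :=
  stmt16_general a b h n
end

section
/- Let R be a ring and a, b ∈ R with Hirano inverses a' and b' respectively. If ab = ba = 0, then a + b has Hirano inverse a' + b'. -/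
theorem stmt18 {R : Type*} [Ring R] (a b a' b' : R)
    (ha : IsHiranoInverse a a') (hb : IsHiranoInverse b b')
    (hab : a * b = 0) (hba : b * a = 0) :
    IsHiranoInverse (a + b) (a' + b') := by
  obtain ⟨hna, hca, ha3⟩ := ha
  obtain ⟨hnb, hcb, hb3⟩ := hb
  have key : ∀ x y : R, x * y = 0 → ∀ z : R, x * (y * z) = 0 := by
    intro x y h z; rw [← mul_assoc, h, zero_mul]
  -- a' = a' * a' * a  and a' = a * (a' * a')
  have haL : a' * a' * a = a' := by
    rw [mul_assoc, ← hca, ← mul_assoc]; exact ha3.symm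
  have haR : a * (a' * a') = a' := by
    rw [← mul_assoc, hca, mul_assoc, ← mul_assoc]; exact ha3.symm
  have hbL : b' * b' * b = b' := by
    rw [mul_assoc, ← hcb, ← mul_assoc]; exact hb3.symm
  have hbR : b * (b' * b') = b' := by
    rw [← mul_assoc, hcb, mul_assoc, ← mul_assoc]; exact hb3.symm
  -- cross products vanish
  have h1 : a' * b = 0 := by rw [← haL, mul_assoc, hab, mul_zero]
  have h2 : b * a' = 0 := by rw [← haR, ← mul_assoc, hba, zero_mul]
  have h3 : a * b' = 0 := by rw [← hbR, ← mul_assoc, hab, zero_mul]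
  have h4 : b' * a = 0 := by rw [← hbL, mul_assoc, hba, mul_zero]
  have h5 : a' * b' = 0 := by rw [← haL, mul_assoc, h3, mul_zero]
  have h6 : b' * a' = 0 := by rw [← hbL, mul_assoc, h2, mul_zero]
  refine ⟨?_, ?_, ?_⟩
  · have heq : (a + b) ^ 2 - (a + b) * (a' + b') = (a ^ 2 - a * a') + (b ^ 2 - b * b') := by
      simp only [sq, mul_add, add_mul, hab, hba, h2, h3]
      abel
    rw [heq]
    have hcomm : Commute (a ^ 2 - a * a') (b ^ 2 - b * b') := by
      have e1 : (a ^ 2 - a * a') * (b ^ 2 - b * b') = 0 := by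
        simp [sub_mul, mul_sub, sq, mul_assoc, key _ _ hab, key _ _ h1, key _ _ h3, key _ _ h5]
      have e2 : (b ^ 2 - b * b') * (a ^ 2 - a * a') = 0 := by
        simp [sub_mul, mul_sub, sq, mul_assoc, key _ _ hba, key _ _ h2, key _ _ h4, key _ _ h6]
      unfold Commute SemiconjBy
      rw [e1, e2]
    exact hcomm.isNilpotent_add hna hnb
  · simp only [mul_add, add_mul, hab, hba, h1, h2, h3, h4, hca, hcb]
  · simp only [mul_add, add_mul, mul_assoc, key _ _ hab, key _ _ hba, key _ _ h1, key _ _ h2,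
      key _ _ h3, key _ _ h4, h1, h2, h3, h4, h5, h6, zero_mul, mul_zero, add_zero, zero_add]
    rw [← mul_assoc, ← mul_assoc, ← ha3, ← hb3]
end

section
/- Let R be a ring and a, b ∈ R with a² = b² = 0. If ab has a strongly Drazin inverse, then a + b has a Hirano inverse. -/
lemma sd_comm {R : Type*} [Ring R] {c x z : R}
    (hnil : IsNilpotent (c - c * x)) (hcom : c * x = x * c) (hrep : x = x * c * x)
    (hz : z * c = c * z) : z * x = x * z := by
  obtain ⟨m, hm⟩ := hnil
  have hmN : (c - c * x) ^ (m + 1) = 0 := by rw [pow_succ, hm, zero_mul]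
  have hxe : x * (c * x) = x := by rw [← mul_assoc, ← hrep]
  have hex : (c * x) * x = x := by rw [hcom]; exact hrep.symm
  have hee : IsIdempotentElem (c * x) := by
    unfold IsIdempotentElem
    rw [mul_assoc, hxe]
  have hec : c * (c * x) = (c * x) * c := by rw [mul_assoc, hcom]
  have Ccx : Commute c x := hcom
  have Cec : Commute c (c * x) := hec
  have Czc : Commute z c := hz
  have Cc1 : Commute c (1 - c * x) := (Commute.one_right c).sub_right Cec
  have Ce1 : Commute (c * x) (1 - c * x) :=
    (Commute.one_right (c * x)).sub_right (Commute.refl (c * x))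
  have Cn1 : Commute (c - c * x) (1 - c * x) := Cc1.sub_left Ce1
  have h1e : IsIdempotentElem (1 - c * x) := hee.one_sub
  have hpow1 : (1 - c * x) ^ (m + 1) = 1 - c * x := h1e.pow_succ_eq m
  have he0 : (c * x) * (1 - c * x) = 0 := by
    rw [mul_sub, mul_one, hee.eq, sub_self]
  have h1 : c * (1 - c * x) = (c - c * x) * (1 - c * x) := by
    rw [sub_mul, he0, sub_zero]
  have key : c ^ (m + 1) * (1 - c * x) = 0 := by
    calc c ^ (m+1) * (1 - c * x) = c ^ (m+1) * (1 - c * x) ^ (m+1) := by rw [hpow1]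
      _ = (c * (1 - c * x)) ^ (m+1) := (Cc1.mul_pow (m+1)).symm
      _ = ((c - c * x) * (1 - c * x)) ^ (m+1) := by rw [h1]
      _ = (c - c * x) ^ (m+1) * (1 - c * x) ^ (m+1) := Cn1.mul_pow (m+1)
      _ = 0 := by rw [hmN, zero_mul]
  have key2 : (1 - c * x) * c ^ (m + 1) = 0 := by
    rw [← (Cc1.pow_left (m+1)).eq, key]
  have heN1 : c * x = c ^ (m+1) * x ^ (m+1) := by
    rw [← hee.pow_succ_eq m]; exact Ccx.mul_pow (m+1)
  have heN2 : c * x = x ^ (m+1) * c ^ (m+1) := by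
    rw [← hee.pow_succ_eq m, hcom]; exact Ccx.symm.mul_pow (m+1)
  have CzcN : Commute z (c ^ (m+1)) := Czc.pow_right (m+1)
  have part1 : ((c * x) * z) * (1 - c * x) = 0 := by
    calc ((c * x) * z) * (1 - c * x)
        = ((x ^ (m+1) * c ^ (m+1)) * z) * (1 - c * x) := by rw [← heN2]
      _ = (x ^ (m+1) * (z * c ^ (m+1))) * (1 - c * x) := by
            rw [mul_assoc (x ^ (m+1)) (c ^ (m+1)) z, CzcN.eq]
      _ = x ^ (m+1) * (z * (c ^ (m+1) * (1 - c * x))) := by noncomm_ring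
      _ = 0 := by rw [key, mul_zero, mul_zero]
  have part2 : (1 - c * x) * (z * (c * x)) = 0 := by
    calc (1 - c * x) * (z * (c * x))
        = (1 - c * x) * (z * (c ^ (m+1) * x ^ (m+1))) := by rw [← heN1]
      _ = (1 - c * x) * ((z * c ^ (m+1)) * x ^ (m+1)) := by rw [mul_assoc]
      _ = (1 - c * x) * ((c ^ (m+1) * z) * x ^ (m+1)) := by rw [CzcN.eq]
      _ = ((1 - c * x) * c ^ (m+1)) * (z * x ^ (m+1)) := by noncomm_ring
      _ = 0 := by rw [key2, zero_mul]
  have e1 : (c * x) * z = ((c * x) * z) * (c * x) := by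
    have := part1
    rw [mul_sub, mul_one, sub_eq_zero] at this
    exact this
  have e2 : z * (c * x) = (c * x) * (z * (c * x)) := by
    have := part2
    rw [sub_mul, one_mul, sub_eq_zero] at this
    exact this
  have hez : (c * x) * z = z * (c * x) := by
    rw [e1, mul_assoc, ← e2]
  calc z * x = z * ((c * x) * x) := by rw [hex]
    _ = (z * (c * x)) * x := by noncomm_ring
    _ = ((c * x) * z) * x := by rw [← hez]
    _ = ((x * c) * z) * x := by rw [hcom]
    _ = (x * (c * z)) * x := by noncomm_ring
    _ = (x * (z * c)) * x := by rw [← hz]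
    _ = ((x * z) * c) * x := by noncomm_ring
    _ = x * (z * (c * x)) := by noncomm_ring
    _ = x * ((c * x) * z) := by rw [hez]
    _ = (x * (c * x)) * z := by noncomm_ring
    _ = x * z := by rw [hxe]

theorem stmt19 {R : Type*} [Ring R] (a b : R) (ha : a ^ 2 = 0) (hb : b ^ 2 = 0)
    (h : ∃ x, IsStronglyDrazinInverse (a * b) x) :
    ∃ y, IsHiranoInverse (a + b) y := by
  obtain ⟨x, hnil, hcom, hrep⟩ := h
  have ha' : a * a = 0 := by rw [← pow_two]; exact ha
  have hb' : b * b = 0 := by rw [← pow_two]; exact hb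
  set z : R := b * (x * (x * a)) with hzdef
  set s : R := x + z with hsdef
  have hcxx : a * b * (x * x) = x := by
    calc a * b * (x * x) = (a * b * x) * x := by noncomm_ring
      _ = (x * (a * b)) * x := by rw [hcom]
      _ = x := hrep.symm
  have hxxc : x * x * (a * b) = x := by
    calc x * x * (a * b) = x * ((a * b) * x) := by rw [mul_assoc, ← hcom]
      _ = x * (a * b) * x := by noncomm_ring
      _ = x := hrep.symm
  have hqc : b * a * (a * b) = 0 := by
    calc b * a * (a * b) = b * ((a * a) * b) := by noncomm_ring
      _ = 0 := by rw [ha', zero_mul, mul_zero]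
  have hcq : a * b * (b * a) = 0 := by
    calc a * b * (b * a) = a * ((b * b) * a) := by noncomm_ring
      _ = 0 := by rw [hb', zero_mul, mul_zero]
  have hqx : b * a * x = 0 := by
    calc b * a * x = b * a * (a * b * (x * x)) := by rw [hcxx]
      _ = (b * a * (a * b)) * (x * x) := by noncomm_ring
      _ = 0 := by rw [hqc, zero_mul]
  have hxq : x * (b * a) = 0 := by
    calc x * (b * a) = (x * x * (a * b)) * (b * a) := by rw [hxxc]
      _ = (x * x) * (a * b * (b * a)) := by noncomm_ring
      _ = 0 := by rw [hcq, mul_zero]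
  have hcz : a * b * z = 0 := by
    calc a * b * z = a * ((b * b) * (x * (x * a))) := by rw [hzdef]; noncomm_ring
      _ = 0 := by rw [hb', zero_mul, mul_zero]
  have hzc : z * (a * b) = 0 := by
    calc z * (a * b) = b * (x * (x * ((a * a) * b))) := by rw [hzdef]; noncomm_ring
      _ = 0 := by rw [ha', zero_mul, mul_zero, mul_zero, mul_zero]
  have hqz : b * a * z = b * (x * a) := by
    calc b * a * z = b * ((a * b * (x * x)) * a) := by rw [hzdef]; noncomm_ring
      _ = b * (x * a) := by rw [hcxx]
  have hzq : z * (b * a) = b * (x * a) := by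
    calc z * (b * a) = b * ((x * x * (a * b)) * a) := by rw [hzdef]; noncomm_ring
      _ = b * (x * a) := by rw [hxxc]
  have hzqz : z * (b * a * z) = z := by
    calc z * (b * a * z) = z * (b * (x * a)) := by rw [hqz]
      _ = b * ((x * x * (a * b)) * (x * a)) := by rw [hzdef]; noncomm_ring
      _ = b * (x * (x * a)) := by rw [hxxc, ← mul_assoc]
      _ = z := hzdef.symm
  have hcs : (a * b + b * a) * s = a * b * x + b * (x * a) := by
    calc (a * b + b * a) * s
        = a * b * x + a * b * z + (b * a * x + b * a * z) := by rw [hsdef]; noncomm_ring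
      _ = a * b * x + 0 + (0 + b * (x * a)) := by rw [hcz, hqx, hqz]
      _ = a * b * x + b * (x * a) := by rw [add_zero, zero_add]
  have hsc1 : s * (a * b + b * a) = x * (a * b) + z * (b * a) := by
    calc s * (a * b + b * a)
        = x * (a * b) + x * (b * a) + (z * (a * b) + z * (b * a)) := by
          rw [hsdef]; noncomm_ring
      _ = x * (a * b) + 0 + (0 + z * (b * a)) := by rw [hxq, hzc]
      _ = x * (a * b) + z * (b * a) := by rw [add_zero, zero_add]
  have hsc : s * (a * b + b * a) = a * b * x + b * (x * a) := by
    rw [hsc1, hzq, ← hcom]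
  have hcomm' : (a * b + b * a) * s = s * (a * b + b * a) := hcs.trans hsc.symm
  have hrep' : s = s * (a * b + b * a) * s := by
    have : s * (a * b + b * a) * s = s := by
      calc s * (a * b + b * a) * s = (x * (a * b) + z * (b * a)) * s := by rw [hsc1]
        _ = x * (a * b) * x + x * (a * b * z) + (z * (b * a * x) + z * (b * a * z)) := by
            rw [hsdef]; noncomm_ring
        _ = x * (a * b) * x + x * 0 + (z * 0 + z) := by rw [hcz, hqx, hzqz]
        _ = x + z := by rw [← hrep, mul_zero, mul_zero, add_zero, zero_add]
        _ = s := hsdef.symm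
    exact this.symm
  have hA' : (1 - x) * (a * b) = a * b - a * b * x := by
    rw [sub_mul, one_mul, ← hcom]
  have hBform : ∀ k : ℕ,
      (b * ((1 - x) * a)) ^ (k + 1) = b * ((a * b - a * b * x) ^ k * ((1 - x) * a)) := by
    intro k
    induction k with
    | zero => rw [pow_one, pow_zero, one_mul]
    | succ k ih =>
      calc (b * ((1 - x) * a)) ^ (k + 2)
          = (b * ((1 - x) * a)) ^ (k + 1) * (b * ((1 - x) * a)) := by rw [pow_succ]
        _ = (b * ((a * b - a * b * x) ^ k * ((1 - x) * a))) * (b * ((1 - x) * a)) := by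
            rw [ih]
        _ = b * ((a * b - a * b * x) ^ k * (((1 - x) * (a * b)) * ((1 - x) * a))) := by
            noncomm_ring
        _ = b * ((a * b - a * b * x) ^ k * ((a * b - a * b * x) * ((1 - x) * a))) := by
            rw [hA']
        _ = b * ((a * b - a * b * x) ^ (k + 1) * ((1 - x) * a)) := by
            rw [← mul_assoc ((a * b - a * b * x) ^ k), ← pow_succ]
  have hAnil : IsNilpotent (a * b - a * b * x) := hnil
  have hBnil : IsNilpotent (b * a - b * a * z) := by
    obtain ⟨m, hm⟩ := hnil
    have hBeq : b * a - b * a * z = b * ((1 - x) * a) := by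
      rw [hqz]; noncomm_ring
    exact ⟨m + 1, by rw [hBeq, hBform m, hm, zero_mul, mul_zero]⟩
  have hAB : (a * b - a * b * x) * (b * a - b * a * z) = 0 := by
    calc (a * b - a * b * x) * (b * a - b * a * z)
        = (a * b * (b * a)) - (a * b * (b * a)) * z
            - ((a * b) * (x * (b * a)) - ((a * b) * (x * (b * a))) * z) := by noncomm_ring
      _ = 0 := by rw [hcq, hxq]; simp
  have hBA : (b * a - b * a * z) * (a * b - a * b * x) = 0 := by
    calc (b * a - b * a * z) * (a * b - a * b * x)
        = (b * a * (a * b)) - (b * a * (a * b)) * x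
            - ((b * a) * (z * (a * b)) - ((b * a) * (z * (a * b))) * x) := by noncomm_ring
      _ = 0 := by rw [hqc, hzc]; simp
  have hnil' : IsNilpotent ((a * b + b * a) - (a * b + b * a) * s) := by
    have hdiff : (a * b + b * a) - (a * b + b * a) * s
        = (a * b - a * b * x) + (b * a - b * a * z) := by
      calc (a * b + b * a) - (a * b + b * a) * s
          = (a * b - a * b * x) + (b * a - b * a * z) - (a * b * z + b * a * x) := by
            rw [hsdef]; noncomm_ring
        _ = (a * b - a * b * x) + (b * a - b * a * z) := by
            rw [hcz, hqx, add_zero, sub_zero]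
    have hCAB : Commute (a * b - a * b * x) (b * a - b * a * z) := by
      unfold Commute SemiconjBy
      rw [hAB, hBA]
    rw [hdiff]
    exact hCAB.isNilpotent_add hAnil hBnil
  have hd2 : (a + b) * (a + b) = a * b + b * a := by
    calc (a + b) * (a + b) = a * a + (a * b + b * a) + b * b := by noncomm_ring
      _ = a * b + b * a := by rw [ha', hb', zero_add, add_zero]
  have hdc : (a + b) * (a * b + b * a) = (a * b + b * a) * (a + b) := by
    rw [← hd2, mul_assoc]
  have hds : (a + b) * s = s * (a + b) := sd_comm hnil' hcomm' hrep' hdc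
  have hcss : (a * b + b * a) * (s * s) = s := by
    calc (a * b + b * a) * (s * s) = ((a * b + b * a) * s) * s := by noncomm_ring
      _ = (s * (a * b + b * a)) * s := by rw [hcomm']
      _ = s := hrep'.symm
  refine ⟨(a + b) * s, ?_, ?_, ?_⟩
  · have heq : (a + b) ^ 2 - (a + b) * ((a + b) * s)
        = (a * b + b * a) - (a * b + b * a) * s := by
      rw [pow_two, ← mul_assoc, hd2]
    rw [heq]
    exact hnil'
  · rw [mul_assoc, ← hds]
  · have : (a + b) * s * (a + b) * ((a + b) * s) = (a + b) * s := by
      calc (a + b) * s * (a + b) * ((a + b) * s)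
          = ((a + b) * (s * (a + b))) * ((a + b) * s) := by noncomm_ring
        _ = ((a + b) * ((a + b) * s)) * ((a + b) * s) := by rw [← hds]
        _ = ((a + b) * (a + b)) * (s * ((a + b) * s)) := by noncomm_ring
        _ = (a * b + b * a) * (s * ((a + b) * s)) := by rw [hd2]
        _ = (a * b + b * a) * (s * (s * (a + b))) := by rw [hds]
        _ = ((a * b + b * a) * (s * s)) * (a + b) := by noncomm_ring
        _ = s * (a + b) := by rw [hcss]
        _ = (a + b) * s := by rw [← hds]
    exact this.symm
end
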